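/- Applying the SMP update at vertex i (updating λ_{e,i} for all e ∈ N_i simultaneously to block-optimality) decreases the dual objective by at least (1/(8|N_i|η))·Σ_{e∈N_i}‖S_{e,i}^λ - μ_i^λ‖₁². -/

import Mathlib

open Finset

noncomputable section

variable {n m d : ℕ}

/-- The endpoint of edge `e` at side `s`. -/
def ep (ends : Fin m → Fin n × Fin n) (e : Fin m) (s : Fin 2) : Fin n :=
  if s = 0 then (ends e).1 else (ends e).2

/-- Unnormalized vertex factor. -/
def vExp (η : ℝ) (ends : Fin m → Fin n × Fin n) (Ci : Fin n → Fin d → ℝ)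
    (lam : Fin m → Fin 2 → Fin d → ℝ) (i : Fin n) (x : Fin d) : ℝ :=
  Real.exp (η * (-(Ci i x) +
    ∑ e, ∑ s, if ep ends e s = i then lam e s x else 0))

/-- Unnormalized edge factor. -/
def eExp (η : ℝ) (Ce : Fin m → Fin d → Fin d → ℝ)
    (lam : Fin m → Fin 2 → Fin d → ℝ) (e : Fin m) (x₁ x₂ : Fin d) : ℝ :=
  Real.exp (η * (-(Ce e x₁ x₂) - lam e 0 x₁ - lam e 1 x₂))

/-- Normalized vertex pseudo-marginal `μ_i^λ`. -/
def muV (η : ℝ) (ends : Fin m → Fin n × Fin n) (Ci : Fin n → Fin d → ℝ)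
    (lam : Fin m → Fin 2 → Fin d → ℝ) (i : Fin n) (x : Fin d) : ℝ :=
  vExp η ends Ci lam i x / ∑ x', vExp η ends Ci lam i x'

/-- Normalized edge pseudo-marginal `μ_e^λ`. -/
def muE (η : ℝ) (Ce : Fin m → Fin d → Fin d → ℝ)
    (lam : Fin m → Fin 2 → Fin d → ℝ) (e : Fin m) (x₁ x₂ : Fin d) : ℝ :=
  eExp η Ce lam e x₁ x₂ / ∑ y₁, ∑ y₂, eExp η Ce lam e y₁ y₂

/-- Marginalization `S_{e,i}^λ` of the edge pseudo-marginal onto endpoint `s`. -/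
def Smarg (η : ℝ) (Ce : Fin m → Fin d → Fin d → ℝ)
    (lam : Fin m → Fin 2 → Fin d → ℝ) (e : Fin m) (s : Fin 2) (x : Fin d) : ℝ :=
  if s = 0 then ∑ x₂, muE η Ce lam e x x₂ else ∑ x₁, muE η Ce lam e x₁ x

/-- The dual objective `L`. -/
def dualL (η : ℝ) (ends : Fin m → Fin n × Fin n) (Ci : Fin n → Fin d → ℝ)
    (Ce : Fin m → Fin d → Fin d → ℝ) (lam : Fin m → Fin 2 → Fin d → ℝ) : ℝ :=
  (1 / η) * ∑ i, Real.log (∑ x, vExp η ends Ci lam i x)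
    + (1 / η) * ∑ e, Real.log (∑ x₁, ∑ x₂, eExp η Ce lam e x₁ x₂)


/-!
The update has a closed form: with `α = 1/(|N_i|+1)` and
`Z = Σ_x (μ_i(x) ∏_{e ∈ N_i} S_{e,i}(x))^α`, it multiplies the vertex partition function at `i`,
and the edge partition function once per incidence with `i`, by `Z`. So it lowers `L` by
`-(|N_i|+1) log Z / η`, and the block-optimal `λ'` does at least as well. To bound `Z`, split
`μ ∏_e S_e` into the `|N_i|` factors `μ^(α/|N_i|) S_e^α`: AM-GM bounds `Z` by the average over
`e` of `Σ_x S_e^(1-α) μ^α`, and a second weighted AM-GM bounds each of those by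
`1 - 2α (1 - BC(S_e, μ))`, where `BC(p, q) = Σ_x √(p q)` is the Bhattacharyya coefficient.
Conclude with `-log Z ≥ 1 - Z` and `‖p - q‖₁² ≤ 8 (1 - BC(p, q))`, which is Cauchy–Schwarz
applied to `|√p - √q| (√p + √q)`.
-/

open Real

section Bhattacharyya

variable {ι : Type*} [Fintype ι]

def bhattacharyya (p q : ι → ℝ) : ℝ := ∑ x, √(p x * q x)

theorem sq_sum_abs_sub_le_eight_mul_one_sub_bhattacharyya {p q : ι → ℝ}
    (hp : ∀ x, 0 ≤ p x) (hq : ∀ x, 0 ≤ q x) (hp1 : ∑ x, p x = 1) (hq1 : ∑ x, q x = 1) :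
    (∑ x, |p x - q x|) ^ 2 ≤ 8 * (1 - bhattacharyya p q) := by
  set B := bhattacharyya p q
  have hsq (x : ι) : √(p x * q x) = √(p x) * √(q x) := sqrt_mul (hp x) _
  have habs (x : ι) : |p x - q x| = |√(p x) - √(q x)| * (√(p x) + √(q x)) := by
    have hfac : p x - q x = (√(p x) - √(q x)) * (√(p x) + √(q x)) := by
      rw [mul_comm, ← sq_sub_sq, sq_sqrt (hp x), sq_sqrt (hq x)]
    rw [hfac, abs_mul, abs_of_nonneg (by positivity : 0 ≤ √(p x) + √(q x))]
  have hminus : ∑ x, |√(p x) - √(q x)| ^ 2 = 2 - 2 * B := by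
    have (x : ι) : |√(p x) - √(q x)| ^ 2 = p x + q x - 2 * √(p x * q x) := by
      rw [sq_abs, sub_sq, sq_sqrt (hp x), sq_sqrt (hq x), hsq]; ring
    simp only [this, sum_sub_distrib, sum_add_distrib, ← mul_sum, hp1, hq1, B, bhattacharyya]
    ring
  have hplus : ∑ x, (√(p x) + √(q x)) ^ 2 = 2 + 2 * B := by
    have (x : ι) : (√(p x) + √(q x)) ^ 2 = p x + q x + 2 * √(p x * q x) := by
      rw [add_sq, sq_sqrt (hp x), sq_sqrt (hq x), hsq]; ring
    simp only [this, sum_add_distrib, ← mul_sum, hp1, hq1, B, bhattacharyya]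
    ring
  -- Cauchy–Schwarz gives `4 (1 - B²)`, and `4 (1 - B²) ≤ 8 (1 - B)` is `(1 - B)² ≥ 0`.
  have hCS := sum_mul_sq_le_sq_mul_sq univ (fun x => |√(p x) - √(q x)|) (fun x => √(p x) + √(q x))
  simp only [← habs, hminus, hplus] at hCS
  nlinarith [sq_nonneg (1 - B)]

theorem sum_rpow_one_sub_mul_rpow_le {p q : ι → ℝ} (hp : ∀ x, 0 ≤ p x) (hq : ∀ x, 0 ≤ q x)
    (hp1 : ∑ x, p x = 1) {α : ℝ} (hα : 0 ≤ α) (hα2 : 2 * α ≤ 1) :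
    ∑ x, p x ^ (1 - α) * q x ^ α ≤ 1 - 2 * α * (1 - bhattacharyya p q) := by
  -- `p^(1-α) q^α = p^(1-2α) √(pq)^(2α)`, then weighted AM-GM.
  have hpt (x : ι) : p x ^ (1 - α) * q x ^ α ≤ (1 - 2 * α) * p x + 2 * α * √(p x * q x) := by
    have hsplit : p x ^ (1 - α) * q x ^ α = p x ^ (1 - 2 * α) * √(p x * q x) ^ (2 * α) := by
      rw [sqrt_eq_rpow, ← rpow_mul (mul_nonneg (hp x) (hq x)), mul_rpow (hp x) (hq x),
        show 1 / 2 * (2 * α) = α by ring, ← mul_assoc, ← rpow_add' (hp x) (by linarith)]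
      ring_nf
    rw [hsplit]
    exact geom_mean_le_arith_mean2_weighted (by linarith) (by linarith) (hp x) (sqrt_nonneg _)
      (by ring)
  calc ∑ x, p x ^ (1 - α) * q x ^ α
      ≤ ∑ x, ((1 - 2 * α) * p x + 2 * α * √(p x * q x)) := sum_le_sum fun x _ => hpt x
    _ = 1 - 2 * α * (1 - bhattacharyya p q) := by
      rw [sum_add_distrib, ← mul_sum, ← mul_sum, hp1, bhattacharyya]; ring

end Bhattacharyya

section GeometricMean

variable {ι κ : Type*} [Fintype ι] {N : Finset κ}

theorem rpow_mul_prod_le_average (hN : N.Nonempty) {a : ℝ} {b : κ → ℝ} (ha : 0 ≤ a)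
    (hb : ∀ k ∈ N, 0 ≤ b k) :
    (a * ∏ k ∈ N, b k) ^ ((N.card : ℝ) + 1)⁻¹ ≤
      (N.card : ℝ)⁻¹ * ∑ k ∈ N, b k ^ (1 - ((N.card : ℝ) + 1)⁻¹) * a ^ ((N.card : ℝ) + 1)⁻¹ := by
  set K : ℝ := (N.card : ℝ)
  set α := (K + 1)⁻¹
  have hK : 0 < K := Nat.cast_pos.2 hN.card_pos
  have hKα : (1 - α) * K⁻¹ = α := by simp only [α]; field_simp; ring
  have hterm : ∀ k ∈ N, (b k ^ (1 - α) * a ^ α) ^ K⁻¹ = b k ^ α * a ^ (α * K⁻¹) := by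
    intro k hk
    rw [mul_rpow (rpow_nonneg (hb k hk) _) (rpow_nonneg ha _), ← rpow_mul (hb k hk),
      ← rpow_mul ha, hKα]
  have hprod : ∏ k ∈ N, (b k ^ (1 - α) * a ^ α) ^ K⁻¹ = (a * ∏ k ∈ N, b k) ^ α := by
    rw [prod_congr rfl hterm, prod_mul_distrib, prod_const, finsetProd_rpow _ _ hb,
      ← rpow_natCast, ← rpow_mul ha, mul_rpow ha (prod_nonneg hb), inv_mul_cancel_right₀ hK.ne',
      mul_comm]
  rw [mul_sum, ← hprod]
  refine geom_mean_le_arith_mean_weighted N (fun _ => K⁻¹) _ (fun _ _ => by positivity) ?_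
    fun k hk => mul_nonneg (rpow_nonneg (hb k hk) _) (rpow_nonneg ha _)
  rw [sum_const, nsmul_eq_mul, mul_inv_cancel₀ hK.ne']

theorem sum_rpow_mul_prod_le (hN : N.Nonempty) {μ : ι → ℝ} {S : κ → ι → ℝ}
    (hμ : ∀ x, 0 ≤ μ x) (hS : ∀ k ∈ N, ∀ x, 0 ≤ S k x) (hS1 : ∀ k ∈ N, ∑ x, S k x = 1) :
    ∑ x, (μ x * ∏ k ∈ N, S k x) ^ ((N.card : ℝ) + 1)⁻¹ ≤
      1 - 2 * ((N.card : ℝ) + 1)⁻¹ / N.card * ∑ k ∈ N, (1 - bhattacharyya (S k) μ) := by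
  set K : ℝ := (N.card : ℝ)
  set α := (K + 1)⁻¹
  have hK : 1 ≤ K := Nat.one_le_cast.2 hN.card_pos
  have hα2 : 2 * α ≤ 1 := by
    rw [← div_eq_mul_inv, div_le_one (by positivity)]; linarith
  calc ∑ x, (μ x * ∏ k ∈ N, S k x) ^ α
      ≤ ∑ x, K⁻¹ * ∑ k ∈ N, S k x ^ (1 - α) * μ x ^ α :=
        sum_le_sum fun x _ => rpow_mul_prod_le_average hN (hμ x) fun k hk => hS k hk x
    _ = K⁻¹ * ∑ k ∈ N, ∑ x, S k x ^ (1 - α) * μ x ^ α := by rw [← mul_sum, sum_comm]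
    _ ≤ K⁻¹ * ∑ k ∈ N, (1 - 2 * α * (1 - bhattacharyya (S k) μ)) := by
        gcongr with k hk
        exact sum_rpow_one_sub_mul_rpow_le (hS k hk) hμ (hS1 k hk) (by positivity) hα2
    _ = 1 - 2 * α / K * ∑ k ∈ N, (1 - bhattacharyya (S k) μ) := by
        rw [sum_sub_distrib, sum_const, nsmul_eq_mul, ← mul_sum]
        simp only [K]
        field_simp

theorem sum_sq_sum_abs_sub_le_mul_neg_log (hN : N.Nonempty) {μ : ι → ℝ} {S : κ → ι → ℝ}
    (hμ : ∀ x, 0 < μ x) (hμ1 : ∑ x, μ x = 1) (hS : ∀ k ∈ N, ∀ x, 0 < S k x)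
    (hS1 : ∀ k ∈ N, ∑ x, S k x = 1) :
    1 / (8 * (N.card : ℝ)) * ∑ k ∈ N, (∑ x, |S k x - μ x|) ^ 2 ≤
      ((N.card : ℝ) + 1) * -log (∑ x, (μ x * ∏ k ∈ N, S k x) ^ ((N.card : ℝ) + 1)⁻¹) := by
  set K : ℝ := (N.card : ℝ)
  set α := (K + 1)⁻¹
  set Z := ∑ x, (μ x * ∏ k ∈ N, S k x) ^ α
  set T := ∑ k ∈ N, (1 - bhattacharyya (S k) μ)
  have hK : 0 < K := Nat.cast_pos.2 hN.card_pos
  have hW : ∑ k ∈ N, (∑ x, |S k x - μ x|) ^ 2 ≤ 8 * T := by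
    rw [mul_sum]
    exact sum_le_sum fun k hk => sq_sum_abs_sub_le_eight_mul_one_sub_bhattacharyya
      (fun x => (hS k hk x).le) (fun x => (hμ x).le) (hS1 k hk) hμ1
  have hT : 0 ≤ T := by
    have := sum_nonneg fun k (_ : k ∈ N) => sq_nonneg (∑ x, |S k x - μ x|)
    linarith
  have hZ : Z ≤ 1 - 2 * α / K * T :=
    sum_rpow_mul_prod_le hN (fun x => (hμ x).le) (fun k hk x => (hS k hk x).le) hS1
  have hZpos : 0 < Z := by
    have : (univ : Finset ι).Nonempty := nonempty_of_sum_ne_zero (by rw [hμ1]; exact one_ne_zero)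
    exact sum_pos (fun x _ => rpow_pos_of_pos
      (mul_pos (hμ x) (prod_pos fun k hk => hS k hk x)) _) this
  calc 1 / (8 * K) * ∑ k ∈ N, (∑ x, |S k x - μ x|) ^ 2
      ≤ 1 / (8 * K) * (8 * T) := by gcongr
    _ ≤ (K + 1) * (2 * α / K * T) := by
        rw [show (K + 1) * (2 * α / K * T) = 2 * T / K by simp only [α]; field_simp]
        field_simp
        linarith
    _ ≤ (K + 1) * (1 - Z) := by gcongr; linarith
    _ ≤ (K + 1) * -log Z := by gcongr; linarith [log_le_sub_one_of_pos hZpos]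

end GeometricMean

section Normalization

variable (η : ℝ) (ends : Fin m → Fin n × Fin n) (Ci : Fin n → Fin d → ℝ)
  (Ce : Fin m → Fin d → Fin d → ℝ) (lam : Fin m → Fin 2 → Fin d → ℝ) [NeZero d]

theorem sum_vExp_pos (i : Fin n) : 0 < ∑ x, vExp η ends Ci lam i x :=
  sum_pos (fun _ _ => exp_pos _) univ_nonempty

theorem sum_eExp_pos (e : Fin m) : 0 < ∑ x₁, ∑ x₂, eExp η Ce lam e x₁ x₂ :=
  sum_pos (fun _ _ => sum_pos (fun _ _ => exp_pos _) univ_nonempty) univ_nonempty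

theorem muV_pos (i : Fin n) (x : Fin d) : 0 < muV η ends Ci lam i x :=
  div_pos (exp_pos _) (sum_vExp_pos η ends Ci lam i)

theorem sum_muV (i : Fin n) : ∑ x, muV η ends Ci lam i x = 1 := by
  simp only [muV, ← sum_div, div_self (sum_vExp_pos η ends Ci lam i).ne']

theorem Smarg_pos (e : Fin m) (s : Fin 2) (x : Fin d) : 0 < Smarg η Ce lam e s x := by
  have hmuE (x₁ x₂ : Fin d) : 0 < muE η Ce lam e x₁ x₂ :=
    div_pos (exp_pos _) (sum_eExp_pos η Ce lam e)
  unfold Smarg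
  split_ifs <;> exact sum_pos (fun _ _ => hmuE _ _) univ_nonempty

theorem sum_Smarg (e : Fin m) (s : Fin 2) : ∑ x, Smarg η Ce lam e s x = 1 := by
  have hZ := (sum_eExp_pos η Ce lam e).ne'
  unfold Smarg muE
  split_ifs
  · simp only [← sum_div, div_self hZ]
  · rw [sum_comm]; simp only [← sum_div, div_self hZ]

theorem sum_sum_eExp_mul_left (e : Fin m) (h : Fin d → ℝ) :
    ∑ x₁, ∑ x₂, eExp η Ce lam e x₁ x₂ * h x₁ =
      (∑ y₁, ∑ y₂, eExp η Ce lam e y₁ y₂) * ∑ x, Smarg η Ce lam e 0 x * h x := by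
  have hZ := (sum_eExp_pos η Ce lam e).ne'
  simp only [Smarg, muE, if_pos, ← sum_div, ← sum_mul, mul_sum]
  exact sum_congr rfl fun _ _ => by field_simp

theorem sum_sum_eExp_mul_right (e : Fin m) (h : Fin d → ℝ) :
    ∑ x₁, ∑ x₂, eExp η Ce lam e x₁ x₂ * h x₂ =
      (∑ y₁, ∑ y₂, eExp η Ce lam e y₁ y₂) * ∑ x, Smarg η Ce lam e 1 x * h x := by
  have hZ := (sum_eExp_pos η Ce lam e).ne'
  rw [sum_comm]
  simp only [Smarg, one_ne_zero, if_false, muE, ← sum_div, ← sum_mul, mul_sum]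
  exact sum_congr rfl fun _ _ => by field_simp

end Normalization

def incident (ends : Fin m → Fin n × Fin n) (i : Fin n) : Finset (Fin m × Fin 2) :=
  univ.filter fun p => ep ends p.1 p.2 = i

theorem mem_incident {ends : Fin m → Fin n × Fin n} {i : Fin n} {p : Fin m × Fin 2} :
    p ∈ incident ends i ↔ ep ends p.1 p.2 = i := by
  simp [incident]

theorem sum_sum_ite_ep_eq {M : Type*} [AddCommMonoid M] (ends : Fin m → Fin n × Fin n)
    (i : Fin n) (f : Fin m → Fin 2 → M) :
    ∑ e, ∑ s, (if ep ends e s = i then f e s else 0) = ∑ p ∈ incident ends i, f p.1 p.2 := by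
  rw [incident, sum_filter, Fintype.sum_prod_type]

theorem vExp_add (η : ℝ) (ends : Fin m → Fin n × Fin n) (Ci : Fin n → Fin d → ℝ)
    (lam D : Fin m → Fin 2 → Fin d → ℝ) (i : Fin n) (x : Fin d) :
    vExp η ends Ci (fun e s x => lam e s x + D e s x) i x =
      vExp η ends Ci lam i x * exp (η * ∑ p ∈ incident ends i, D p.1 p.2 x) := by
  simp only [vExp, ← exp_add, ite_add_zero, sum_add_distrib, sum_sum_ite_ep_eq]
  ring_nf

theorem eExp_add (η : ℝ) (Ce : Fin m → Fin d → Fin d → ℝ) (lam D : Fin m → Fin 2 → Fin d → ℝ)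
    (e : Fin m) (x₁ x₂ : Fin d) :
    eExp η Ce (fun e s x => lam e s x + D e s x) e x₁ x₂ =
      eExp η Ce lam e x₁ x₂ * exp (-(η * D e 0 x₁)) * exp (-(η * D e 1 x₂)) := by
  simp only [eExp, ← exp_add]
  ring_nf

section Update

variable (η : ℝ) (ends : Fin m → Fin n × Fin n) (Ci : Fin n → Fin d → ℝ)
  (Ce : Fin m → Fin d → Fin d → ℝ) (lam : Fin m → Fin 2 → Fin d → ℝ) (i : Fin n)

def smpProd (x : Fin d) : ℝ :=
  muV η ends Ci lam i x * ∏ p ∈ incident ends i, Smarg η Ce lam p.1 p.2 x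

def smpShift (e : Fin m) (s : Fin 2) (x : Fin d) : ℝ :=
  if ep ends e s = i then
    η⁻¹ * (log (Smarg η Ce lam e s x) -
      ((incident ends i).card + 1 : ℝ)⁻¹ * log (smpProd η ends Ci Ce lam i x))
  else 0

def smpUpdate : Fin m → Fin 2 → Fin d → ℝ := fun e s x =>
  lam e s x + smpShift η ends Ci Ce lam i e s x

theorem smpUpdate_of_ne {e : Fin m} {s : Fin 2} (h : ep ends e s ≠ i) (x : Fin d) :
    smpUpdate η ends Ci Ce lam i e s x = lam e s x := by
  simp [smpUpdate, smpShift, h]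

theorem vExp_smpUpdate_of_ne {j : Fin n} (hj : j ≠ i) (x : Fin d) :
    vExp η ends Ci (smpUpdate η ends Ci Ce lam i) j x = vExp η ends Ci lam j x := by
  unfold smpUpdate
  rw [vExp_add, sum_eq_zero fun p hp => by rw [smpShift, if_neg ((mem_incident.1 hp).trans_ne hj)],
    mul_zero, exp_zero, mul_one]

def smpPartition : ℝ :=
  ∑ x, smpProd η ends Ci Ce lam i x ^ ((incident ends i).card + 1 : ℝ)⁻¹

variable [NeZero d]

theorem smpProd_pos (x : Fin d) : 0 < smpProd η ends Ci Ce lam i x :=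
  mul_pos (muV_pos η ends Ci lam i x) (prod_pos fun p _ => Smarg_pos η Ce lam p.1 p.2 x)

theorem vExp_smpUpdate_self (hη : η ≠ 0) (x : Fin d) :
    vExp η ends Ci (smpUpdate η ends Ci Ce lam i) i x =
      (∑ x', vExp η ends Ci lam i x') *
        smpProd η ends Ci Ce lam i x ^ ((incident ends i).card + 1 : ℝ)⁻¹ := by
  have hG := smpProd_pos η ends Ci Ce lam i x
  have hμ := muV_pos η ends Ci lam i x
  have hv : vExp η ends Ci lam i x ≠ 0 := (exp_pos _).ne'
  have hS : ∀ p ∈ incident ends i, Smarg η Ce lam p.1 p.2 x ≠ 0 :=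
    fun p _ => (Smarg_pos η Ce lam p.1 p.2 x).ne'
  have hlogG : log (smpProd η ends Ci Ce lam i x) =
      log (muV η ends Ci lam i x) + ∑ p ∈ incident ends i, log (Smarg η Ce lam p.1 p.2 x) := by
    rw [smpProd, log_mul hμ.ne' (prod_ne_zero_iff.2 hS), log_prod hS]
  -- With `G = μ ∏ S` and `K = |N_i|`, the shifts at `i` add up to
  -- `log ∏ S - K/(K+1) log G = log G / (K+1) - log μ`.
  have hexp : η * ∑ p ∈ incident ends i, smpShift η ends Ci Ce lam i p.1 p.2 x =
      ((incident ends i).card + 1 : ℝ)⁻¹ * log (smpProd η ends Ci Ce lam i x) -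
        log (muV η ends Ci lam i x) := by
    unfold smpShift
    rw [sum_ite_of_true fun _ hp => mem_incident.1 hp, ← mul_sum, sum_sub_distrib,
      sum_const, nsmul_eq_mul, hlogG]
    field_simp
    ring
  unfold smpUpdate
  rw [vExp_add, hexp, exp_sub, exp_log hμ, mul_comm _ (log _), ← rpow_def_of_pos hG,
    muV]
  field_simp [hv, (sum_vExp_pos η ends Ci lam i).ne']

theorem smpPartition_pos : 0 < smpPartition η ends Ci Ce lam i :=
  sum_pos (fun x _ => rpow_pos_of_pos (smpProd_pos η ends Ci Ce lam i x) _) univ_nonempty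

theorem log_sum_vExp_smpUpdate (hη : η ≠ 0) (j : Fin n) :
    log (∑ x, vExp η ends Ci (smpUpdate η ends Ci Ce lam i) j x) =
      log (∑ x, vExp η ends Ci lam j x) +
        if j = i then log (smpPartition η ends Ci Ce lam i) else 0 := by
  by_cases hj : j = i
  · subst hj
    rw [sum_congr rfl fun x _ => vExp_smpUpdate_self η ends Ci Ce lam j hη x, ← mul_sum,
      if_pos rfl]
    exact log_mul (sum_vExp_pos η ends Ci lam j).ne' (smpPartition_pos η ends Ci Ce lam j).ne'
  · simp only [vExp_smpUpdate_of_ne η ends Ci Ce lam i hj, if_neg hj, add_zero]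

theorem exp_neg_smpShift (hη : η ≠ 0) (e : Fin m) (s : Fin 2) (x : Fin d) :
    exp (-(η * smpShift η ends Ci Ce lam i e s x)) =
      if ep ends e s = i then
        (Smarg η Ce lam e s x)⁻¹ *
          smpProd η ends Ci Ce lam i x ^ ((incident ends i).card + 1 : ℝ)⁻¹
      else 1 := by
  unfold smpShift
  split_ifs
  · rw [← mul_assoc, mul_inv_cancel₀ hη, one_mul, neg_sub, exp_sub,
      exp_log (Smarg_pos η Ce lam e s x), mul_comm _ (log _),
      ← rpow_def_of_pos (smpProd_pos η ends Ci Ce lam i x), div_eq_inv_mul]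
  · simp

theorem log_sum_eExp_smpUpdate (hη : η ≠ 0) {e : Fin m} (he : (ends e).1 ≠ (ends e).2) :
    log (∑ x₁, ∑ x₂, eExp η Ce (smpUpdate η ends Ci Ce lam i) e x₁ x₂) =
      log (∑ x₁, ∑ x₂, eExp η Ce lam e x₁ x₂) +
        ∑ s, if ep ends e s = i then log (smpPartition η ends Ci Ce lam i) else 0 := by
  have hZe := (sum_eExp_pos η Ce lam e).ne'
  have hZ := (smpPartition_pos η ends Ci Ce lam i).ne'
  have hcancel (s : Fin 2) : ∑ x, Smarg η Ce lam e s x * ((Smarg η Ce lam e s x)⁻¹ *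
      smpProd η ends Ci Ce lam i x ^ ((incident ends i).card + 1 : ℝ)⁻¹) =
        smpPartition η ends Ci Ce lam i :=
    sum_congr rfl fun x _ => mul_inv_cancel_left₀ (Smarg_pos η Ce lam e s x).ne' _
  unfold smpUpdate
  simp only [eExp_add, exp_neg_smpShift η ends Ci Ce lam i hη, Fin.sum_univ_two]
  by_cases h0 : ep ends e 0 = i <;> by_cases h1 : ep ends e 1 = i
  · exact absurd (by simpa [ep] using h0.trans h1.symm) he
  · simp only [h0, h1, if_true, if_false, mul_one, sum_sum_eExp_mul_left, hcancel,
      log_mul hZe hZ, add_zero]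
  · simp only [h0, h1, if_true, if_false, mul_one, sum_sum_eExp_mul_right, hcancel,
      log_mul hZe hZ, zero_add]
  · simp only [h0, h1, if_false, mul_one, add_zero]

theorem dualL_smpUpdate (hη : η ≠ 0) (hsimple : ∀ e, (ends e).1 ≠ (ends e).2) :
    dualL η ends Ci Ce (smpUpdate η ends Ci Ce lam i) = dualL η ends Ci Ce lam +
      1 / η * (((incident ends i).card + 1) * log (smpPartition η ends Ci Ce lam i)) := by
  simp only [dualL, log_sum_vExp_smpUpdate η ends Ci Ce lam i hη,
    log_sum_eExp_smpUpdate η ends Ci Ce lam i hη (hsimple _), sum_add_distrib, sum_ite_eq',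
    mem_univ, if_true, sum_sum_ite_ep_eq, sum_const, nsmul_eq_mul]
  ring

end Update

theorem smp_update_improvement_general (η : ℝ) (hη : 0 < η)
    (ends : Fin m → Fin n × Fin n)
    (hsimple : ∀ e, (ends e).1 ≠ (ends e).2)
    (Ci : Fin n → Fin d → ℝ) (Ce : Fin m → Fin d → Fin d → ℝ)
    (lam lam' : Fin m → Fin 2 → Fin d → ℝ) (i₀ : Fin n)
    (hopt : ∀ lam'' : Fin m → Fin 2 → Fin d → ℝ,
      (∀ e s x, ep ends e s ≠ i₀ → lam'' e s x = lam e s x) →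
      dualL η ends Ci Ce lam' ≤ dualL η ends Ci Ce lam'') :
    (1 / (8 * ((Finset.univ.filter
          (fun p : Fin m × Fin 2 => ep ends p.1 p.2 = i₀)).card : ℝ) * η)) *
      ∑ p ∈ Finset.univ.filter
          (fun p : Fin m × Fin 2 => ep ends p.1 p.2 = i₀),
        (∑ x, |Smarg η Ce lam p.1 p.2 x - muV η ends Ci lam i₀ x|) ^ 2
      ≤ dualL η ends Ci Ce lam - dualL η ends Ci Ce lam' := by
  have hlam : dualL η ends Ci Ce lam' ≤ dualL η ends Ci Ce lam := hopt lam fun _ _ _ _ => rfl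
  -- With no states or no incident edges the left-hand side is an empty sum.
  rcases Nat.eq_zero_or_pos d with rfl | hd
  · simpa using hlam
  have : NeZero d := NeZero.of_pos hd
  set N := Finset.univ.filter (fun p : Fin m × Fin 2 => ep ends p.1 p.2 = i₀)
  rcases N.eq_empty_or_nonempty with hN | hN
  · simpa [hN] using hlam
  have hupdate := hopt (smpUpdate η ends Ci Ce lam i₀) fun _ _ x h =>
    smpUpdate_of_ne η ends Ci Ce lam i₀ h x
  have hdrop : dualL η ends Ci Ce (smpUpdate η ends Ci Ce lam i₀) = dualL η ends Ci Ce lam +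
      1 / η * ((N.card + 1) * log (smpPartition η ends Ci Ce lam i₀)) :=
    dualL_smpUpdate η ends Ci Ce lam i₀ hη.ne' hsimple
  set W := ∑ p ∈ N, (∑ x, |Smarg η Ce lam p.1 p.2 x - muV η ends Ci lam i₀ x|) ^ 2
  have hbound : 1 / (8 * (N.card : ℝ)) * W ≤
      ((N.card : ℝ) + 1) * -log (smpPartition η ends Ci Ce lam i₀) :=
    sum_sq_sum_abs_sub_le_mul_neg_log hN (muV_pos η ends Ci lam i₀) (sum_muV η ends Ci lam i₀)
      (fun p _ => Smarg_pos η Ce lam p.1 p.2) (fun p _ => sum_Smarg η Ce lam p.1 p.2)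
  calc 1 / (8 * (N.card : ℝ) * η) * W = 1 / η * (1 / (8 * (N.card : ℝ)) * W) := by ring
    _ ≤ 1 / η * (((N.card : ℝ) + 1) * -log (smpPartition η ends Ci Ce lam i₀)) := by gcongr
    _ ≤ dualL η ends Ci Ce lam - dualL η ends Ci Ce lam' := by linarith

/-- SMP improvement: updating the block of dual variables
`{λ_{e,i₀}(x) : e ∈ N_{i₀}, x ∈ χ}` at vertex `i₀` to block-optimality
decreases the dual objective by at least
`(1/(8|N_{i₀}|η)) Σ_{e∈N_{i₀}} ‖S_{e,i₀}^λ - μ_{i₀}^λ‖₁²`. -/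
theorem smp_update_improvement (η : ℝ) (hη : 0 < η) (hd : 2 ≤ d)
    (ends : Fin m → Fin n × Fin n)
    (hsimple : ∀ e, (ends e).1 ≠ (ends e).2)
    (Ci : Fin n → Fin d → ℝ) (Ce : Fin m → Fin d → Fin d → ℝ)
    (lam lam' : Fin m → Fin 2 → Fin d → ℝ) (i₀ : Fin n)
    (hdeg : 0 < (Finset.univ.filter
      (fun p : Fin m × Fin 2 => ep ends p.1 p.2 = i₀)).card)
    (hagree : ∀ e s x, ep ends e s ≠ i₀ → lam' e s x = lam e s x)
    (hopt : ∀ lam'' : Fin m → Fin 2 → Fin d → ℝ,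
      (∀ e s x, ep ends e s ≠ i₀ → lam'' e s x = lam e s x) →
      dualL η ends Ci Ce lam' ≤ dualL η ends Ci Ce lam'') :
    (1 / (8 * ((Finset.univ.filter
          (fun p : Fin m × Fin 2 => ep ends p.1 p.2 = i₀)).card : ℝ) * η)) *
      ∑ p ∈ Finset.univ.filter
          (fun p : Fin m × Fin 2 => ep ends p.1 p.2 = i₀),
        (∑ x, |Smarg η Ce lam p.1 p.2 x - muV η ends Ci lam i₀ x|) ^ 2
      ≤ dualL η ends Ci Ce lam - dualL η ends Ci Ce lam' :=
  smp_update_improvement_general η hη ends hsimple Ci Ce lam lam' i₀ hopt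

end
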